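/- arXiv:2511.09849 — 4 statements merged into one kernel-verified Lean document; each statement's English description precedes it below -/
import Mathlib

section
/- Let A be a complete lattice and let F, G : A → A be monotone maps. Suppose that the set Pre_{νF}(G) is closed under F, i.e., for every b ∈ A with νF ≤ b and G b ≤ b, one has both νF ≤ F b and G (F b) ≤ F b. Then G (νF) ≤ νF. -/
/-- If `Pre_{νF}(G)` is closed under `F`, then `G (νF) ≤ νF`. -/
theorem stmt0 {A : Type*} [CompleteLattice A] (F G : A →o A)
    (hclosed : ∀ b : A, OrderHom.gfp F ≤ b → G b ≤ b →
      OrderHom.gfp F ≤ F b ∧ G (F b) ≤ F b) :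
    G (OrderHom.gfp F) ≤ OrderHom.gfp F := by
  set S : Set A := {b | OrderHom.gfp F ≤ b ∧ G b ≤ b} with hS
  set m : A := sInf S with hm
  have hνm : OrderHom.gfp F ≤ m := le_sInf fun c hc => hc.1
  have hGm : G m ≤ m := le_sInf fun c hc => (G.mono (sInf_le hc)).trans hc.2
  obtain ⟨h1, h2⟩ := hclosed m hνm hGm
  have hmF : m ≤ F m := sInf_le ⟨h1, h2⟩
  have hmν : m ≤ OrderHom.gfp F := F.le_gfp hmF
  have : m = OrderHom.gfp F := le_antisymm hmν hνm
  calc G (OrderHom.gfp F) ≤ m := this ▸ hGm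
    _ ≤ OrderHom.gfp F := hmν
end

section
/- Let A be a complete lattice and let F, G : A → A be monotone maps. Write F ∧ id_A for the monotone map sending b to F b ⊓ b. Suppose that Pre_{νF}(G) is closed under F ∧ id_A, i.e., for every b ∈ A with νF ≤ b and G b ≤ b, one has both νF ≤ F b ⊓ b and G (F b ⊓ b) ≤ F b ⊓ b. Then G (νF) ≤ νF. -/
/-- If `Pre_{νF}(G)` is closed under `F ∧ id`, then `G (νF) ≤ νF`. -/
theorem stmt2 {A : Type*} [CompleteLattice A] (F G : A →o A)
    (hclosed : ∀ b : A, OrderHom.gfp F ≤ b → G b ≤ b →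
      OrderHom.gfp F ≤ F b ⊓ b ∧ G (F b ⊓ b) ≤ F b ⊓ b) :
    G (OrderHom.gfp F) ≤ OrderHom.gfp F := by
  set ν := OrderHom.gfp F with hν
  set S : Set A := {b | ν ≤ b ∧ G b ≤ b} with hS
  set m := sInf S with hm
  have hνm : ν ≤ m := le_sInf fun b hb => hb.1
  have hGm : G m ≤ m := le_sInf fun b hb => le_trans (G.mono (sInf_le hb)) hb.2
  obtain ⟨h1, h2⟩ := hclosed m hνm hGm
  have hmem : F m ⊓ m ∈ S := ⟨h1, h2⟩
  have hmF : m ≤ F m := le_trans (sInf_le hmem) inf_le_left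
  have hmν : m ≤ ν := F.le_gfp hmF
  exact le_trans (G.mono hνm) (le_trans hGm hmν)
end

section
/- Let A be a complete lattice and let F, G : A → A be monotone maps. Suppose that the set Pre_{νF}(G) is closed under F, i.e., for every b ∈ A with νF ≤ b and G b ≤ b, one has both νF ≤ F b and G (F b) ≤ F b. Then νF is the least element of Pre_{νF}(G); that is, νF = ⨅ {b ∈ A | νF ≤ b and G b ≤ b}. -/
/-- If `Pre_{νF}(G)` is closed under `F`, then `νF` is the least element
of `Pre_{νF}(G)`, i.e. `νF = ⨅ Pre_{νF}(G)`. -/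
theorem stmt5 {A : Type*} [CompleteLattice A] (F G : A →o A)
    (hclosed : ∀ b : A, OrderHom.gfp F ≤ b → G b ≤ b →
      OrderHom.gfp F ≤ F b ∧ G (F b) ≤ F b) :
    IsLeast {b : A | OrderHom.gfp F ≤ b ∧ G b ≤ b} (OrderHom.gfp F) ∧
    OrderHom.gfp F = sInf {b : A | OrderHom.gfp F ≤ b ∧ G b ≤ b} := by
  set S := {b : A | OrderHom.gfp F ≤ b ∧ G b ≤ b} with hS
  set m := sInf S with hm
  have hm1 : OrderHom.gfp F ≤ m := le_sInf fun b hb => hb.1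
  have hm2 : G m ≤ m := le_sInf fun b hb => (G.monotone (sInf_le hb)).trans hb.2
  obtain ⟨h1, h2⟩ := hclosed m hm1 hm2
  have hmF : m ≤ F m := sInf_le ⟨h1, h2⟩
  have hle : m ≤ OrderHom.gfp F := OrderHom.le_gfp F hmF
  have heq : OrderHom.gfp F = m := le_antisymm hm1 hle
  have hGν : G (OrderHom.gfp F) ≤ OrderHom.gfp F := by rw [heq]; exact hm2
  exact ⟨⟨⟨le_rfl, hGν⟩, fun b hb => hb.1⟩, heq⟩
end

section
/- Let C be a category with a terminal object 1, and let K be a class of morphisms in C. Let j : A ⟶ B and k : B ⟶ E be morphisms of C such that k belongs to ⋔(K⋔) (i.e., k has the left lifting property with respect to every morphism having the right lifting property with respect to K). Let f : X ⟶ Y be a morphism of C such that f belongs to K⋔ and the unique morphism Y ⟶ 1 belongs to K⋔. Then f has the right lifting property with respect to j if and only if f has the right lifting property with respect to the composite k ∘ j : A ⟶ E. -/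
open CategoryTheory CategoryTheory.Limits

universe v u

/-- The class of morphisms having the right lifting property with respect to every
member of `K`. -/
def rlpClass {C : Type u} [Category.{v} C] (K : MorphismProperty C) :
    MorphismProperty C :=
  fun _ _ f => ∀ ⦃A B : C⦄ (g : A ⟶ B), K g → HasLiftingProperty g f

/-- The class of morphisms having the left lifting property with respect to every
member of `K`. -/
def llpClass {C : Type u} [Category.{v} C] (K : MorphismProperty C) :
    MorphismProperty C :=
  fun _ _ f => ∀ ⦃X Y : C⦄ (g : X ⟶ Y), K g → HasLiftingProperty f g

/-- If `k ∈ ⋔(K⋔)`, `f ∈ K⋔`, and `Y ⟶ 1` is in `K⋔`, then `f` has the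
right lifting property with respect to `j` iff it has it with respect to `j ≫ k`. -/
theorem stmt6 {C : Type u} [Category.{v} C] [HasTerminal C]
    (K : MorphismProperty C) {A B E X Y : C}
    (j : A ⟶ B) (k : B ⟶ E)
    (hk : llpClass (rlpClass K) k)
    (f : X ⟶ Y) (hf : rlpClass K f)
    (hY : rlpClass K (terminal.from Y)) :
    HasLiftingProperty j f ↔ HasLiftingProperty (j ≫ k) f := by
  have hkf : HasLiftingProperty k f := hk f hf
  constructor
  · intro h
    exact HasLiftingProperty.of_comp_left j k f
  · intro h
    have hkY : HasLiftingProperty k (terminal.from Y) := hk _ hY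
    constructor
    intro u v sq
    -- lift v : B ⟶ Y through k using terminal square
    have sq1 : CommSq v k (terminal.from Y) (terminal.from E) := ⟨by simp⟩
    obtain ⟨⟨w⟩⟩ := hkY.sq_hasLift sq1
    have sq2 : CommSq u (j ≫ k) f w.l := ⟨by
      rw [Category.assoc, w.fac_left, sq.w]⟩
    obtain ⟨⟨l⟩⟩ := h.sq_hasLift sq2
    exact ⟨⟨⟨k ≫ l.l, by
      rw [← Category.assoc]; exact l.fac_left, by
      rw [Category.assoc, l.fac_right, w.fac_left]⟩⟩⟩
end
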